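/- Layer-peeling bound for ReLU layers (combining equations (32)–(35)): let X be a set, x₁, …, x_M ∈ X, let G be a nonempty set of functions from X to ℝ^J such that for each m the set {g(x_m) : g ∈ G} ⊆ ℝ^J is bounded, let W ≥ 0, and let φ(t) = max(t, 0) be the ReLU function. Then E_ξ[ sup_{g ∈ G, w ∈ ℝ^J, ‖w‖₂ ≤ W} Σ_{m=1}^M ξ_m φ(⟨w, g(x_m)⟩) ] ≤ W · E_ξ[ sup_{g ∈ G} ‖ Σ_{m=1}^M ξ_m g(x_m) ‖₂ ], where ξ is uniform over {−1,+1}^M and ⟨·,·⟩ and ‖·‖₂ are the Euclidean inner product and norm on ℝ^J. -/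

import Mathlib

/-!
Since `ReLU` is 1-Lipschitz, Talagrand's contraction principle removes it: replacing `φ(t)` by `t`
in one coordinate at a time can only increase `E_ξ sup`, because pairing each sign vector `ξ`
with the vector that differs from it in that coordinate gives a two-point inequality between
suprema. What is left is linear in `w`, and
`Σ_m ξ_m ⟨w, g(x_m)⟩ = ⟨w, Σ_m ξ_m g(x_m)⟩ ≤ W ‖Σ_m ξ_m g(x_m)‖`.
-/

/-- The real sign `+1`/`−1` associated with a Boolean, used to enumerate sign vectors
`ξ ∈ {−1, +1}^I` as functions `I → Bool`. -/
noncomputable def sgn (b : Bool) : ℝ := if b then 1 else -1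

open Set RealInnerProductSpace

lemma abs_sgn (b : Bool) : |sgn b| = 1 := by cases b <;> simp [sgn]

lemma sgn_not (b : Bool) : sgn (!b) = -sgn b := by cases b <;> simp [sgn]

/-- `2 ^ |κ|` times the empirical Rademacher complexity `E_ξ sup_i Σ_m ξ_m T i m`. -/
noncomputable def rademacherSum {ι κ : Type*} [Fintype κ] [DecidableEq κ] (T : ι → κ → ℝ) : ℝ :=
  ∑ ε : κ → Bool, ⨆ i, ∑ m, sgn (ε m) * T i m

lemma bddAbove_range_sum_sgn_mul {ι κ : Type*} [Fintype κ] {T : ι → κ → ℝ} {C : ℝ}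
    (hT : ∀ i m, |T i m| ≤ C) (ε : κ → Bool) :
    BddAbove (range fun i => ∑ m, sgn (ε m) * T i m) := by
  refine ⟨Fintype.card κ * C, forall_mem_range.2 fun i => ?_⟩
  calc ∑ m, sgn (ε m) * T i m ≤ ∑ _m : κ, C := Finset.sum_le_sum fun m _ =>
        (le_abs_self _).trans (by rw [abs_mul, abs_sgn, one_mul]; exact hT i m)
    _ = Fintype.card κ * C := by simp

lemma ciSup_add_ciSup_sub_le {ι : Type*} [Nonempty ι] {A B ψ : ι → ℝ}
    (hψ : ∀ i j, |ψ i - ψ j| ≤ |B i - B j|)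
    (hBadd : BddAbove (range fun i => A i + B i)) (hBsub : BddAbove (range fun i => A i - B i)) :
    (⨆ i, A i + ψ i) + (⨆ i, A i - ψ i) ≤ (⨆ i, A i + B i) + (⨆ i, A i - B i) := by
  -- the sign of `B i - B j` decides which of the pairs `(i, j)`, `(j, i)` on the right dominates
  have pair : ∀ i j, (A i + ψ i) + (A j - ψ j) ≤ (⨆ i, A i + B i) + (⨆ i, A i - B i) := by
    intro i j
    have := le_abs_self (ψ i - ψ j)
    have := hψ i j
    have := le_ciSup hBadd i
    have := le_ciSup hBadd j
    have := le_ciSup hBsub i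
    have := le_ciSup hBsub j
    rcases abs_cases (B i - B j) with ⟨h, -⟩ | ⟨h, -⟩ <;> linarith
  rw [← le_sub_iff_add_le]
  refine ciSup_le fun i => ?_
  rw [le_sub_comm]
  exact ciSup_le fun j => le_sub_iff_add_le'.2 (pair i j)

lemma sum_update_not {κ M : Type*} [Fintype κ] [DecidableEq κ] [AddCommMonoid M] (k : κ)
    (f : (κ → Bool) → M) : ∑ ε, f (Function.update ε k (!ε k)) = ∑ ε, f ε :=
  Function.Involutive.bijective (fun ε => by simp) |>.sum_comp f

lemma sum_sgn_mul_eq_sum_erase_add {κ : Type*} [Fintype κ] [DecidableEq κ] {k : κ}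
    {ε ε' : κ → Bool} {y v : κ → ℝ} (hε : ∀ m, m ≠ k → ε' m = ε m)
    (hy : ∀ m, m ≠ k → y m = v m) :
    ∑ m, sgn (ε' m) * y m = ∑ m ∈ Finset.univ.erase k, sgn (ε m) * v m + sgn (ε' k) * y k := by
  rw [← Finset.add_sum_erase _ _ (Finset.mem_univ k), add_comm]
  congr 1
  refine Finset.sum_congr rfl fun m hm => ?_
  rw [hy m (Finset.ne_of_mem_erase hm), hε m (Finset.ne_of_mem_erase hm)]

lemma rademacherSum_le_of_contraction_at {ι κ : Type*} [Nonempty ι] [Fintype κ] [DecidableEq κ]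
    {U V : ι → κ → ℝ} (k : κ) (hUV : ∀ i m, m ≠ k → U i m = V i m)
    (hk : ∀ i j, |U i k - U j k| ≤ |V i k - V j k|)
    (hV : ∀ ε : κ → Bool, BddAbove (range fun i => ∑ m, sgn (ε m) * V i m)) :
    rademacherSum U ≤ rademacherSum V := by
  let flip (ε : κ → Bool) : κ → Bool := Function.update ε k (!ε k)
  let S (Y : ι → κ → ℝ) (ε : κ → Bool) : ℝ := ⨆ i, ∑ m, sgn (ε m) * Y i m
  have pair (ε : κ → Bool) : S U ε + S U (flip ε) ≤ S V ε + S V (flip ε) := by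
    let A i := ∑ m ∈ Finset.univ.erase k, sgn (ε m) * V i m
    have flip_ne (m : κ) (hm : m ≠ k) : flip ε m = ε m := Function.update_of_ne hm _ _
    have flip_k : sgn (flip ε k) = -sgn (ε k) := by simp [flip, sgn_not]
    have split (Y : ι → κ → ℝ) (hY : ∀ i m, m ≠ k → Y i m = V i m) :
        (fun i => ∑ m, sgn (ε m) * Y i m) = (fun i => A i + sgn (ε k) * Y i k) ∧
        (fun i => ∑ m, sgn (flip ε m) * Y i m) = fun i => A i - sgn (ε k) * Y i k := by
      refine ⟨funext fun i => sum_sgn_mul_eq_sum_erase_add (fun _ _ => rfl) (hY i),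
        funext fun i => ?_⟩
      rw [sum_sgn_mul_eq_sum_erase_add flip_ne (hY i), flip_k, neg_mul, ← sub_eq_add_neg]
    obtain ⟨hU₁, hU₂⟩ := split U hUV
    obtain ⟨hV₁, hV₂⟩ := split V fun _ _ _ => rfl
    simp only [S, hU₁, hU₂, hV₁, hV₂]
    refine ciSup_add_ciSup_sub_le (fun i j => ?_) (hV₁ ▸ hV ε) (hV₂ ▸ hV (flip ε))
    simpa only [← mul_sub, abs_mul, abs_sgn, one_mul] using hk i j
  have := Finset.sum_le_sum (s := Finset.univ) fun ε _ => pair ε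
  rw [Finset.sum_add_distrib, Finset.sum_add_distrib, sum_update_not k (S U),
    sum_update_not k (S V)] at this
  show ∑ ε, S U ε ≤ ∑ ε, S V ε
  linarith

lemma abs_sub_le_of_lipschitzWith_one {φ : ℝ → ℝ} (hφ : LipschitzWith 1 φ) (s t : ℝ) :
    |φ s - φ t| ≤ |s - t| := by
  simpa [Real.dist_eq] using hφ.dist_le_mul s t

theorem rademacherSum_comp_le {ι κ : Type*} [Nonempty ι] [Fintype κ] [DecidableEq κ]
    {φ : ℝ → ℝ} (hφ : LipschitzWith 1 φ) {T : ι → κ → ℝ} {C : ℝ} (hT : ∀ i m, |T i m| ≤ C) :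
    rademacherSum (fun i m => φ (T i m)) ≤ rademacherSum T := by
  let U (s : Finset κ) (i : ι) (m : κ) : ℝ := if m ∈ s then T i m else φ (T i m)
  have hU : ∀ s i m, |U s i m| ≤ |φ 0| + C := by
    intro s i m
    have h₁ := abs_sub_abs_le_abs_sub (φ (T i m)) (φ 0)
    have h₂ := abs_sub_le_of_lipschitzWith_one hφ (T i m) 0
    rw [sub_zero] at h₂
    have := hT i m
    by_cases hm : m ∈ s <;> simp only [U, hm, if_true, if_false] <;> linarith [abs_nonneg (φ 0)]
  have chain : ∀ s, rademacherSum (U ∅) ≤ rademacherSum (U s) := by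
    intro s
    induction s using Finset.induction_on with
    | empty => exact le_rfl
    | insert k s hk ih =>
      refine ih.trans (rademacherSum_le_of_contraction_at k (fun i m hm => by simp [U, hm]) ?_
        (bddAbove_range_sum_sgn_mul (hU _)))
      intro i j
      simpa [U, hk] using abs_sub_le_of_lipschitzWith_one hφ (T i k) (T j k)
  simpa [U] using chain Finset.univ

lemma sum_mul_inner_le_norm_mul_norm {F κ : Type*} [NormedAddCommGroup F] [InnerProductSpace ℝ F]
    [Fintype κ] (c : κ → ℝ) (w : F) (v : κ → F) :
    ∑ m, c m * ⟪w, v m⟫ ≤ ‖w‖ * ‖∑ m, c m • v m‖ := by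
  calc ∑ m, c m * ⟪w, v m⟫ = ⟪w, ∑ m, c m • v m⟫ := by simp only [inner_sum, inner_smul_right]
    _ ≤ ‖w‖ * ‖∑ m, c m • v m‖ := real_inner_le_norm _ _

lemma norm_sum_sgn_smul_le {E κ : Type*} [SeminormedAddCommGroup E] [NormedSpace ℝ E] [Fintype κ]
    {v : κ → E} {C : ℝ} (hv : ∀ m, ‖v m‖ ≤ C) (ε : κ → Bool) :
    ‖∑ m, sgn (ε m) • v m‖ ≤ Fintype.card κ * C :=
  calc ‖∑ m, sgn (ε m) • v m‖ ≤ ∑ m, ‖sgn (ε m) • v m‖ := norm_sum_le _ _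
    _ ≤ ∑ _m : κ, C := Finset.sum_le_sum fun m _ => by
        rw [norm_smul, Real.norm_eq_abs, abs_sgn, one_mul]; exact hv m
    _ = Fintype.card κ * C := by simp

lemma exists_forall_norm_le_of_isBounded_image {α E ι : Type*} [SeminormedAddGroup E] [Finite ι]
    {s : Set α} {f : ι → α → E} (hf : ∀ m, Bornology.IsBounded (f m '' s)) :
    ∃ C, ∀ a ∈ s, ∀ m, ‖f m a‖ ≤ C := by
  obtain ⟨C, hC⟩ := isBounded_iff_forall_norm_le.1 (Bornology.isBounded_iUnion.2 hf)
  exact ⟨C, fun a ha m => hC _ (mem_iUnion.2 ⟨m, a, ha, rfl⟩)⟩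

lemma sSup_exists_mem_exists_eq_iSup {α β : Type*} (s : Set α) (P : β → Prop)
    (f : α → β → ℝ) :
    sSup {v : ℝ | ∃ a ∈ s, ∃ b, P b ∧ v = f a b} =
      ⨆ i : {p : α × β // p.1 ∈ s ∧ P p.2}, f i.1.1 i.1.2 := by
  refine congrArg sSup (Set.ext fun v => ⟨?_, ?_⟩)
  · rintro ⟨a, ha, b, hb, rfl⟩
    exact ⟨⟨(a, b), ha, hb⟩, rfl⟩
  · rintro ⟨⟨⟨a, b⟩, ha, hb⟩, rfl⟩
    exact ⟨a, ha, b, hb, rfl⟩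

/-- Layer-peeling bound for ReLU layers (combining equations (32)–(35)): for a class `G`
of `ℝ^J`-valued functions with bounded images at the sample points, a weight-norm bound
`W ≥ 0`, and the ReLU `φ(t) = max(t, 0)`,
`E_ξ[sup_{g ∈ G, ‖w‖₂ ≤ W} Σ_m ξ_m φ(⟨w, g(x_m)⟩)] ≤ W · E_ξ[sup_{g ∈ G} ‖Σ_m ξ_m g(x_m)‖₂]`,
where `ξ` is uniform over `{−1,+1}^M`. -/
theorem relu_layer_peeling {X : Type*} {M J : ℕ} (x : Fin M → X)
    (G : Set (X → EuclideanSpace ℝ (Fin J))) (hG : G.Nonempty)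
    (hbdd : ∀ m, Bornology.IsBounded ((fun g => g (x m)) '' G))
    (W : ℝ) (hW : 0 ≤ W) :
    (2 ^ M : ℝ)⁻¹ *
        ∑ ε : Fin M → Bool,
          sSup {v : ℝ | ∃ g ∈ G, ∃ w : EuclideanSpace ℝ (Fin J), ‖w‖ ≤ W ∧
            v = ∑ m, sgn (ε m) * max (∑ j, w j * (g (x m)) j) 0}
      ≤ W * ((2 ^ M : ℝ)⁻¹ *
          ∑ ε : Fin M → Bool,
            sSup {v : ℝ | ∃ g ∈ G, v = ‖∑ m, sgn (ε m) • g (x m)‖}) := by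
  obtain ⟨C, hC⟩ := exists_forall_norm_le_of_isBounded_image hbdd
  let ι := {p : (X → EuclideanSpace ℝ (Fin J)) × EuclideanSpace ℝ (Fin J) // p.1 ∈ G ∧ ‖p.2‖ ≤ W}
  obtain ⟨g₀, hg₀⟩ := hG
  have : Nonempty ι := ⟨⟨(g₀, 0), hg₀, by simpa using hW⟩⟩
  let T (i : ι) (m : Fin M) : ℝ := ∑ j, i.1.2 j * i.1.1 (x m) j
  have T_eq_inner (i : ι) (m : Fin M) : T i m = ⟪i.1.2, i.1.1 (x m)⟫ := by
    simp [T, PiLp.inner_apply, mul_comm]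
  have hT (i : ι) (m : Fin M) : |T i m| ≤ W * C := by
    rw [T_eq_inner]
    exact (abs_real_inner_le_norm _ _).trans (mul_le_mul i.2.2 (hC _ i.2.1 m) (norm_nonneg _) hW)
  have linear (ε : Fin M → Bool) : ⨆ i, ∑ m, sgn (ε m) * T i m
      ≤ W * sSup {v : ℝ | ∃ g ∈ G, v = ‖∑ m, sgn (ε m) • g (x m)‖} := by
    refine ciSup_le fun i => ?_
    simp only [T_eq_inner]
    refine (sum_mul_inner_le_norm_mul_norm _ _ _).trans <|
      mul_le_mul i.2.2 (le_csSup ⟨M * C, ?_⟩ ⟨_, i.2.1, rfl⟩) (norm_nonneg _) hW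
    rintro _ ⟨g, hg, rfl⟩
    simpa using norm_sum_sgn_smul_le (hC g hg) ε
  rw [mul_left_comm]
  gcongr
  calc _ = rademacherSum fun i m => max (T i m) 0 :=
        Finset.sum_congr rfl fun ε _ => sSup_exists_mem_exists_eq_iSup G _ _
    _ ≤ rademacherSum T := rademacherSum_comp_le (LipschitzWith.id.max_const 0) hT
    _ ≤ _ := by rw [Finset.mul_sum]; exact Finset.sum_le_sum fun ε _ => linear ε
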